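/- Let G = (V, E) be a finite multigraph and let z ∈ ℝ^E_{≥0} satisfy z(δ(v)) = 2 for all v ∈ V and z(δ(S)) ≥ 2 for all nonempty proper subsets S ⊊ V, and suppose e₀ ∈ E has z(e₀) ≥ 1. Then z - χ^{e₀} satisfies the spanning tree polytope constraints: (z - χ^{e₀})(E) = |V| - 1 and (z - χ^{e₀})(E[S]) ≤ |S| - 1 for all S ⊆ V, and z - χ^{e₀} ≥ 0. -/

import Mathlib

/-!
Double counting endpoints gives `∑_{v ∈ S} z(δ(v)) = 2 z(E[S]) + z(δ(S))`. With all degrees equal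
to 2 this yields `z(E) = |V|` for `S = V` and, by the cut condition, `z(E[S]) ≤ |S| - 1` for every
nonempty proper `S`. Subtracting `χ^{e₀}` lowers `z(E)` by exactly 1, which settles `S = V`, and
does not increase any `z(E[S])`; the hypothesis `z(e₀) ≥ 1` keeps the result nonnegative.
-/

open Finset

section

variable {V E : Type*} [DecidableEq V]

theorem sum_ite_incident_eq {M : Type*} [AddCommMonoid M] {ep1 ep2 : E → V}
    (hloopfree : ∀ e, ep1 e ≠ ep2 e) (S : Finset V) (e : E) (x : M) :
    ∑ v ∈ S, (if Xor (ep1 e = v) (ep2 e = v) then x else 0) =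
      (if ep1 e ∈ S ∧ ep2 e ∈ S then 2 • x else 0) +
        if Xor (ep1 e ∈ S) (ep2 e ∈ S) then x else 0 := by
  have hsplit : ∀ v, (if Xor (ep1 e = v) (ep2 e = v) then x else 0) =
      (if ep1 e = v then x else 0) + (if ep2 e = v then x else 0) := by
    intro v
    by_cases h1 : ep1 e = v <;> by_cases h2 : ep2 e = v
    · exact absurd (h1.trans h2.symm) (hloopfree e)
    all_goals simp [h1, h2]
  simp only [hsplit, sum_add_distrib, sum_ite_eq]
  by_cases h1 : ep1 e ∈ S <;> by_cases h2 : ep2 e ∈ S <;> simp [h1, h2, two_nsmul]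

variable [Fintype E] (ep1 ep2 : E → V)

def incidentEdges (v : V) : Finset E := univ.filter fun e => Xor (ep1 e = v) (ep2 e = v)

def cutEdges (S : Finset V) : Finset E := univ.filter fun e => Xor (ep1 e ∈ S) (ep2 e ∈ S)

def inducedEdges (S : Finset V) : Finset E := univ.filter fun e => ep1 e ∈ S ∧ ep2 e ∈ S

variable {ep1 ep2}

theorem sum_sum_incidentEdges {M : Type*} [AddCommMonoid M] (hloopfree : ∀ e, ep1 e ≠ ep2 e)
    (w : E → M) (S : Finset V) :
    ∑ v ∈ S, ∑ e ∈ incidentEdges ep1 ep2 v, w e =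
      2 • ∑ e ∈ inducedEdges ep1 ep2 S, w e + ∑ e ∈ cutEdges ep1 ep2 S, w e := by
  simp only [incidentEdges, inducedEdges, cutEdges, sum_filter, smul_sum]
  rw [sum_comm, ← sum_add_distrib]
  exact sum_congr rfl fun e _ => by
    rw [sum_ite_incident_eq hloopfree, smul_ite, smul_zero]

theorem sum_inducedEdges_le_of_two_le_cut (hloopfree : ∀ e, ep1 e ≠ ep2 e) (z : E → ℝ)
    (hdeg : ∀ v, ∑ e ∈ incidentEdges ep1 ep2 v, z e = 2) (S : Finset V)
    (hS : 2 ≤ ∑ e ∈ cutEdges ep1 ep2 S, z e) :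
    ∑ e ∈ inducedEdges ep1 ep2 S, z e ≤ S.card - 1 := by
  have h := sum_sum_incidentEdges hloopfree z S
  simp only [hdeg, sum_const, nsmul_eq_mul, Nat.cast_ofNat] at h
  linarith

theorem sum_eq_card_of_incident_eq_two [Fintype V] (hloopfree : ∀ e, ep1 e ≠ ep2 e)
    (z : E → ℝ) (hdeg : ∀ v, ∑ e ∈ incidentEdges ep1 ep2 v, z e = 2) :
    ∑ e, z e = Fintype.card V := by
  have h := sum_sum_incidentEdges hloopfree z univ
  simp [hdeg, inducedEdges, cutEdges] at h
  linarith

end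

theorem heldKarp_minus_edge_in_spanningTree_polytope
    {V E : Type*} [Fintype V] [DecidableEq V] [Fintype E] [DecidableEq E]
    (ep1 ep2 : E → V) (hloopfree : ∀ e, ep1 e ≠ ep2 e)
    (z : E → ℝ) (hz : ∀ e, 0 ≤ z e)
    (hdeg : ∀ v : V,
      ∑ e ∈ Finset.univ.filter (fun e => Xor (ep1 e = v) (ep2 e = v)), z e = 2)
    (hcut : ∀ S : Finset V, S.Nonempty → S ≠ Finset.univ →
      2 ≤ ∑ e ∈ Finset.univ.filter (fun e => Xor (ep1 e ∈ S) (ep2 e ∈ S)), z e)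
    (e₀ : E) (he₀ : 1 ≤ z e₀) :
    (∑ e, (z e - if e = e₀ then 1 else 0) = (Fintype.card V : ℝ) - 1) ∧
    (∀ S : Finset V, S.Nonempty →
      ∑ e ∈ Finset.univ.filter (fun e => ep1 e ∈ S ∧ ep2 e ∈ S),
          (z e - if e = e₀ then 1 else 0) ≤ (S.card : ℝ) - 1) ∧
    (∀ e, 0 ≤ z e - if e = e₀ then 1 else 0) := by
  have hsum := sum_eq_card_of_incident_eq_two hloopfree z hdeg
  refine ⟨?_, fun S hS => ?_, fun e => ?_⟩
  · simp [sum_sub_distrib, hsum]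
  · rw [sum_sub_distrib, sum_ite_eq']
    by_cases hSU : S = univ
    · subst hSU
      simp [hsum]
    · have hle : ∑ e ∈ inducedEdges ep1 ep2 S, z e ≤ S.card - 1 :=
        sum_inducedEdges_le_of_two_le_cut hloopfree z hdeg S (hcut S hS hSU)
      split_ifs <;> unfold inducedEdges at hle <;> linarith
  · split_ifs with h
    · linarith [h ▸ he₀]
    · linarith [hz e]
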